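/- arXiv:1709.03899 — 3 statements merged into one kernel-verified Lean document; each statement's English description precedes it below -/
import Mathlib

section
/- Let C be an extension-closed pseudo-variety of finite groups, G ≤ Aut(T), and M ≤ H normal subgroups of G with G/H ∈ C. If G has the C-CSP modulo M, then H has the C-CSP modulo M: every K ⊴ H with H/K ∈ C and K ≥ M contains a level stabilizer of H. -/
/-! The normal core `N = ⋂_{g ∈ G} g K g⁻¹` of `K` in `G` is normal in `G`, contains `M`
and lies in `K`. Since `H` normalizes `K`, the conjugate `g K g⁻¹` only depends on the coset
`g H`, so `N` is a finite intersection of normal subgroups of `H`, each with quotient isomorphic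
to `H / K`; hence `H / N` embeds into a finite product of groups of `C`. Then `G / N`, an
extension of `H / N` by `G / H`, lies in `C`, and the congruence subgroup property of `G` modulo
`M` puts a level stabilizer inside `N ≤ K`. -/

/-- `ValidWord m l` : `l` is a vertex of the rooted tree whose branching numbers are
given by `m` (the vertex `u` has exactly `m u` children, labelled `0, …, m u - 1`). -/
def ValidWord (m : List ℕ → ℕ) (l : List ℕ) : Prop :=
  ∀ i : Fin l.length, l.get i < m (l.take i)

/-- The vertex set of the rooted locally finite tree with branching function `m`. -/
def VertT (m : List ℕ → ℕ) := {l : List ℕ // ValidWord m l}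

/-- A permutation of the vertices is an automorphism of the rooted tree if it
preserves levels (distance from the root) and the prefix (ancestor) relation. -/
def IsTreeAut {m : List ℕ → ℕ} (f : Equiv.Perm (VertT m)) : Prop :=
  (∀ v : VertT m, (f v).1.length = v.1.length) ∧
    ∀ v w : VertT m, v.1 <+: w.1 → (f v).1 <+: (f w).1

/-- The automorphism group of the rooted locally finite tree with branching
function `m`. -/
def AutGT (m : List ℕ → ℕ) : Subgroup (Equiv.Perm (VertT m)) where
  carrier := {f | IsTreeAut f ∧ IsTreeAut f.symm}
  one_mem' := ⟨⟨fun _ => rfl, fun _ _ h => h⟩, ⟨fun _ => rfl, fun _ _ h => h⟩⟩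
  mul_mem' := by
    rintro f g ⟨⟨hf1, hf2⟩, ⟨hf3, hf4⟩⟩ ⟨⟨hg1, hg2⟩, ⟨hg3, hg4⟩⟩
    refine ⟨⟨fun v => ?_, fun v w h => ?_⟩, ⟨fun v => ?_, fun v w h => ?_⟩⟩
    · show (f (g v)).1.length = v.1.length
      rw [hf1, hg1]
    · exact hf2 _ _ (hg2 _ _ h)
    · show (g.symm (f.symm v)).1.length = v.1.length
      rw [hg3, hf3]
    · exact hg4 _ _ (hf4 _ _ h)
  inv_mem' := by
    rintro f ⟨h1, h2⟩
    exact ⟨h2, by show IsTreeAut f.symm.symm; rw [Equiv.symm_symm]; exact h1⟩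

/-- The pointwise stabilizer of level `n`. -/
def lvlStabT (m : List ℕ → ℕ) (n : ℕ) : Subgroup (AutGT m) where
  carrier := {f | ∀ v : VertT m, v.1.length = n → (f : Equiv.Perm (VertT m)) v = v}
  one_mem' := fun _ _ => rfl
  mul_mem' := by
    intro f g hf hg v hv
    show (f : Equiv.Perm (VertT m)) ((g : Equiv.Perm (VertT m)) v) = v
    rw [hg v hv, hf v hv]
  inv_mem' := by
    intro f hf v hv
    have h2 : (f : Equiv.Perm (VertT m))⁻¹ v = v := by
      rw [Equiv.Perm.inv_eq_iff_eq]; exact (hf v hv).symm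
    simpa using h2

/-- The subgroup of automorphisms supported on the subtree rooted at `u`. -/
def rigidT {m : List ℕ → ℕ} (u : VertT m) : Subgroup (AutGT m) where
  carrier := {f | ∀ w : VertT m, ¬ u.1 <+: w.1 → (f : Equiv.Perm (VertT m)) w = w}
  one_mem' := fun _ _ => rfl
  mul_mem' := by
    intro f g hf hg w hw
    show (f : Equiv.Perm (VertT m)) ((g : Equiv.Perm (VertT m)) w) = w
    rw [hg w hw, hf w hw]
  inv_mem' := by
    intro f hf w hw
    have h2 : (f : Equiv.Perm (VertT m))⁻¹ w = w := by
      rw [Equiv.Perm.inv_eq_iff_eq]; exact (hf w hw).symm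
    simpa using h2

/-- The rigid stabilizer in `G` of the level `n`: the subgroup generated by the
rigid vertex stabilizers `rst_G(u) = G ⊓ rigidT u` over the vertices `u` of level
`n` (as these pairwise commute, it is their product). -/
def ristLT {m : List ℕ → ℕ} (G : Subgroup (AutGT m)) (n : ℕ) : Subgroup (AutGT m) :=
  ⨆ u ∈ {u : VertT m | u.1.length = n}, G ⊓ rigidT u

/-- `G` acts transitively on every level of the tree. -/
def LevelTransT {m : List ℕ → ℕ} (G : Subgroup (AutGT m)) : Prop :=
  ∀ u v : VertT m, u.1.length = v.1.length →
    ∃ g ∈ G, (g : Equiv.Perm (VertT m)) u = v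

open scoped Pointwise

section

variable (C : ∀ (E : Type) [Group E], Prop)

def SubgroupClosed : Prop :=
  ∀ (E F : Type) [Group E] [Group F] (f : F →* E), Function.Injective f → C E → C F

def ProdClosed : Prop :=
  ∀ (E F : Type) [Group E] [Group F], C E → C F → C (E × F)

def ExtensionClosed : Prop :=
  ∀ (E : Type) [Group E] (L : Subgroup E) [L.Normal], C L → C (E ⧸ L) → C E

def NormalQuotientIn {E : Type} [Group E] (S : Subgroup E) : Prop :=
  ∃ _ : S.Normal, C (E ⧸ S)

variable {C} {E F : Type} [Group E] [Group F]

theorem SubgroupClosed.of_mulEquiv (hsub : SubgroupClosed C) (e : E ≃* F) (hE : C E) : C F :=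
  hsub _ _ e.symm.toMonoidHom e.symm.injective hE

namespace NormalQuotientIn

theorem map_mulEquiv (hsub : SubgroupClosed C) {S : Subgroup E} (hS : NormalQuotientIn C S)
    (e : E ≃* F) : NormalQuotientIn C (S.map e.toMonoidHom) := by
  obtain ⟨_, hCS⟩ := hS
  have : (S.map e.toMonoidHom).Normal := Subgroup.Normal.map inferInstance _ e.surjective
  exact ⟨inferInstance, hsub.of_mulEquiv (QuotientGroup.congr S _ e rfl) hCS⟩

theorem inf (hsub : SubgroupClosed C) (hprod : ProdClosed C) {S T : Subgroup E}
    (hS : NormalQuotientIn C S) (hT : NormalQuotientIn C T) : NormalQuotientIn C (S ⊓ T) := by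
  obtain ⟨_, hCS⟩ := hS
  obtain ⟨_, hCT⟩ := hT
  let φ := (QuotientGroup.mk' S).prod (QuotientGroup.mk' T)
  have hker : φ.ker = S ⊓ T := by
    rw [MonoidHom.ker_prod, QuotientGroup.ker_mk', QuotientGroup.ker_mk']
  have hCker : C (E ⧸ φ.ker) :=
    hsub _ _ (QuotientGroup.kerLift φ) (QuotientGroup.kerLift_injective φ) (hprod _ _ hCS hCT)
  exact ⟨inferInstance, hsub.of_mulEquiv (QuotientGroup.quotientMulEquivOfEq hker) hCker⟩

theorem sInf_of_finite (hsub : SubgroupClosed C) (hprod : ProdClosed C) {s : Set (Subgroup E)}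
    (hfin : s.Finite) (hne : s.Nonempty) (hs : ∀ S ∈ s, NormalQuotientIn C S) :
    NormalQuotientIn C (sInf s) := by
  obtain ⟨S₀, hS₀⟩ := hne
  -- Inducting on `S₀ ⊓ sInf t` avoids `sInf ∅ = ⊤`: the trivial group need not lie in `C`.
  have key : NormalQuotientIn C (S₀ ⊓ sInf s) := by
    refine Set.Finite.induction_on_subset
      (motive := fun t _ => NormalQuotientIn C (S₀ ⊓ sInf t)) s hfin
      (by simpa using hs S₀ hS₀) fun {S t} hS _ _ ih => ?_
    rw [sInf_insert, inf_left_comm]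
    exact (hs S hS).inf hsub hprod ih
  rwa [inf_eq_right.mpr (sInf_le hS₀)] at key

end NormalQuotientIn

end

namespace Subgroup

variable {A : Type} [Group A]

theorem le_normalizer_of_conj_mem {G H : Subgroup A}
    (hGH : ∀ g ∈ G, ∀ x ∈ H, g * x * g⁻¹ ∈ H) : G ≤ normalizer H := fun g hg x =>
  ⟨hGH g hg x, fun hx => by simpa [mul_assoc] using hGH g⁻¹ (inv_mem hg) _ hx⟩

theorem conj_smul_subgroupOf_eq_map {H : Subgroup A} (K : Subgroup A) {g : A}
    (hg : g ∈ normalizer H) :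
    (ConjAct.toConjAct g • K).subgroupOf H =
      (K.subgroupOf H).map (H.normalizerMonoidHom ⟨g, hg⟩).toMonoidHom := by
  ext x
  rw [mem_subgroupOf, mem_pointwise_smul_iff_inv_smul_mem, mem_map_equiv, mem_subgroupOf]
  rfl

theorem finite_range_conj_smul {G H K : Subgroup A} (hHK : H ≤ normalizer K)
    [Finite (G ⧸ H.subgroupOf G)] :
    (Set.range fun g : G => ConjAct.toConjAct (g : A) • K).Finite := by
  refine (Set.finite_range fun q : G ⧸ H.subgroupOf G =>
    ConjAct.toConjAct (q.out : A) • K).subset ?_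
  rintro _ ⟨g, rfl⟩
  obtain ⟨h, hh⟩ := QuotientGroup.mk_out_eq_mul (H.subgroupOf G) g
  refine ⟨QuotientGroup.mk g, ?_⟩
  dsimp only
  rw [hh, coe_mul, map_mul, mul_smul,
    conjAct_pointwise_smul_eq_self (hHK (mem_subgroupOf.mp h.2))]

def relNormalCore (K G : Subgroup A) : Subgroup A :=
  ⨅ g : G, ConjAct.toConjAct (g : A) • K

theorem mem_relNormalCore {K G : Subgroup A} {x : A} :
    x ∈ K.relNormalCore G ↔ ∀ g ∈ G, g⁻¹ * x * g ∈ K := by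
  simp only [relNormalCore, mem_iInf, mem_pointwise_smul_iff_inv_smul_mem,
    ← ConjAct.toConjAct_inv, ConjAct.toConjAct_smul, inv_inv, Subtype.forall]

theorem relNormalCore_le (K G : Subgroup A) : K.relNormalCore G ≤ K :=
  iInf_le_of_le 1 (by simp)

theorem le_relNormalCore {K G M : Subgroup A} (hGM : G ≤ normalizer M) (hMK : M ≤ K) :
    M ≤ K.relNormalCore G :=
  le_iInf fun g => (conjAct_pointwise_smul_eq_self (hGM g.2)).ge.trans
    (pointwise_smul_le_pointwise_smul_iff.mpr hMK)

theorem le_normalizer_relNormalCore (K G : Subgroup A) :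
    G ≤ normalizer (K.relNormalCore G) := by
  intro g hg
  rw [mem_normalizer_iff]
  intro x
  simp only [mem_relNormalCore]
  constructor
  · intro hx g' hg'
    simpa [mul_assoc] using hx (g⁻¹ * g') (mul_mem (inv_mem hg) hg')
  · intro hx g' hg'
    simpa [mul_assoc] using hx (g * g') (mul_mem hg hg')

end Subgroup

section

variable {C : ∀ (E : Type) [Group E], Prop} {A : Type} [Group A]

open Subgroup

theorem normalQuotientIn_relNormalCore_subgroupOf (hsub : SubgroupClosed C)
    (hprod : ProdClosed C) {G H K : Subgroup A} (hGH : G ≤ normalizer H)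
    (hHK : H ≤ normalizer K) [Finite (G ⧸ H.subgroupOf G)]
    (hK : NormalQuotientIn C (K.subgroupOf H)) :
    NormalQuotientIn C ((K.relNormalCore G).subgroupOf H) := by
  have hcore : (K.relNormalCore G).subgroupOf H =
      ⨅ g : G, (ConjAct.toConjAct (g : A) • K).subgroupOf H :=
    comap_iInf _ _
  rw [hcore]
  refine NormalQuotientIn.sInf_of_finite hsub hprod ?_ (Set.range_nonempty _) ?_
  · exact Set.range_comp _ _ ▸ (finite_range_conj_smul hHK).image (fun S => S.subgroupOf H)
  · rintro _ ⟨g, rfl⟩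
    dsimp only
    rw [conj_smul_subgroupOf_eq_map K (hGH g.2)]
    exact hK.map_mulEquiv hsub _

theorem ExtensionClosed.quotient_subgroupOf (hext : ExtensionClosed C) (hsub : SubgroupClosed C)
    {G H N : Subgroup A} (hHG : H ≤ G) (hNH : N ≤ H) [(N.subgroupOf G).Normal]
    [(H.subgroupOf G).Normal] (hN : NormalQuotientIn C (N.subgroupOf H))
    (hH : C (G ⧸ H.subgroupOf G)) : C (G ⧸ N.subgroupOf G) := by
  obtain ⟨_, hCN⟩ := hN
  -- `H / N` sits in `G / N` as the image of `H`, with quotient `G / H`.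
  let ψ : H →* G ⧸ N.subgroupOf G := (QuotientGroup.mk' _).comp (inclusion hHG)
  have hker : ψ.ker = N.subgroupOf H := by
    ext x
    simp [ψ, mem_subgroupOf]
  have hrange : ψ.range = (H.subgroupOf G).map (QuotientGroup.mk' _) := by
    rw [MonoidHom.range_comp, inclusion_range]
  have : ψ.range.Normal := hrange ▸ Normal.map inferInstance _ (QuotientGroup.mk'_surjective _)
  refine hext _ ψ.range ?_ ?_
  · exact hsub.of_mulEquiv (QuotientGroup.quotientKerEquivRange ψ)
      (hsub.of_mulEquiv (QuotientGroup.quotientMulEquivOfEq hker.symm) hCN)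
  · exact hsub.of_mulEquiv ((QuotientGroup.quotientMulEquivOfEq hrange).trans
      (QuotientGroup.quotientQuotientEquivQuotient _ _ fun _ hx => hNH hx)).symm hH

end

theorem stmt_7_general (m : List ℕ → ℕ)
    (G M H : Subgroup (AutGT m)) (hHG : H ≤ G)
    (hHnorm : ∀ g ∈ G, ∀ x ∈ H, g * x * g⁻¹ ∈ H)
    (hMnorm : ∀ g ∈ G, ∀ x ∈ M, g * x * g⁻¹ ∈ M)
    (C : ∀ (E : Type) [Group E], Prop)
    (hCfin : ∀ (E : Type) [Group E], C E → Finite E)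
    (hCsub : ∀ (E F : Type) [Group E] [Group F] (f : F →* E),
      Function.Injective f → C E → C F)
    (hCprod : ∀ (E F : Type) [Group E] [Group F], C E → C F → C (E × F))
    (hCext : ∀ (E : Type) [Group E] (L : Subgroup E) [L.Normal],
      C L → C (E ⧸ L) → C E)
    [hHGn : (H.subgroupOf G).Normal] (hGH : C (↥G ⧸ H.subgroupOf G))
    (hGmodM : ∀ (K : Subgroup (AutGT m)), K ≤ G → M ≤ K →
      ∀ [hn : (K.subgroupOf G).Normal], C (↥G ⧸ K.subgroupOf G) →
        ∃ n : ℕ, G ⊓ lvlStabT m n ≤ K) :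
    ∀ (K : Subgroup (AutGT m)), K ≤ H → M ≤ K →
      (∀ h ∈ H, ∀ k ∈ K, h * k * h⁻¹ ∈ K) →
      ∀ [hn : (K.subgroupOf H).Normal], C (↥H ⧸ K.subgroupOf H) →
        ∃ n : ℕ, H ⊓ lvlStabT m n ≤ K := by
  intro K hKH hMK hKnorm hKn hCK
  have : Finite (G ⧸ H.subgroupOf G) := hCfin _ hGH
  set N := K.relNormalCore G
  have hNK : N ≤ K := K.relNormalCore_le G
  have hNG : N ≤ G := hNK.trans (hKH.trans hHG)
  have hMN : M ≤ N := Subgroup.le_relNormalCore (Subgroup.le_normalizer_of_conj_mem hMnorm) hMK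
  have : (N.subgroupOf G).Normal :=
    (Subgroup.normal_subgroupOf_iff_le_normalizer hNG).mpr (K.le_normalizer_relNormalCore G)
  have hCNH : NormalQuotientIn C (N.subgroupOf H) :=
    normalQuotientIn_relNormalCore_subgroupOf hCsub hCprod
      (Subgroup.le_normalizer_of_conj_mem hHnorm) (Subgroup.le_normalizer_of_conj_mem hKnorm)
      ⟨hKn, hCK⟩
  obtain ⟨n, hn⟩ := hGmodM N hNG hMN
    (ExtensionClosed.quotient_subgroupOf hCext hCsub hHG (hNK.trans hKH) hCNH hGH)
  exact ⟨n, fun x hx => hNK (hn ⟨hHG hx.1, hx.2⟩)⟩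

/-- Lemma 3.2: let `C` be an extension-closed pseudo-variety of finite
groups, `G ≤ Aut T`, and `M ≤ H` normal subgroups of `G` with `G/H ∈ C`.  If `G`
has the C-CSP modulo `M`, then `H` has the C-CSP modulo `M`: every `K ⊴ H` with
`H/K ∈ C` and `K ≥ M` contains a level stabilizer of `H`. -/
theorem stmt_7 (m : List ℕ → ℕ)
    (G M H : Subgroup (AutGT m)) (hHG : H ≤ G) (hMH : M ≤ H)
    (hHnorm : ∀ g ∈ G, ∀ x ∈ H, g * x * g⁻¹ ∈ H)
    (hMnorm : ∀ g ∈ G, ∀ x ∈ M, g * x * g⁻¹ ∈ M)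
    (C : ∀ (E : Type) [Group E], Prop)
    (hCfin : ∀ (E : Type) [Group E], C E → Finite E)
    (hCsub : ∀ (E F : Type) [Group E] [Group F] (f : F →* E),
      Function.Injective f → C E → C F)
    (hCquot : ∀ (E F : Type) [Group E] [Group F] (f : E →* F),
      Function.Surjective f → C E → C F)
    (hCprod : ∀ (E F : Type) [Group E] [Group F], C E → C F → C (E × F))
    (hCext : ∀ (E : Type) [Group E] (L : Subgroup E) [L.Normal],
      C L → C (E ⧸ L) → C E)
    [hHGn : (H.subgroupOf G).Normal] (hGH : C (↥G ⧸ H.subgroupOf G))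
    (hGmodM : ∀ (K : Subgroup (AutGT m)), K ≤ G → M ≤ K →
      ∀ [hn : (K.subgroupOf G).Normal], C (↥G ⧸ K.subgroupOf G) →
        ∃ n : ℕ, G ⊓ lvlStabT m n ≤ K) :
    ∀ (K : Subgroup (AutGT m)), K ≤ H → M ≤ K →
      (∀ h ∈ H, ∀ k ∈ K, h * k * h⁻¹ ∈ K) →
      ∀ [hn : (K.subgroupOf H).Normal], C (↥H ⧸ K.subgroupOf H) →
        ∃ n : ℕ, H ⊓ lvlStabT m n ≤ K :=
  stmt_7_general m G M H hHG hHnorm hMnorm C hCfin hCsub hCprod hCext (hHGn := hHGn) hGH hGmodM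
end

section
/- For the GGS-group G with constant defining vector and p = 3, the second derived subgroup satisfies ψ(G'') = K' × K' × K', where K = ⟨ba⁻¹⟩^G. -/
/-- The vertex set of the rooted `d`-regular tree: finite words over `Fin d`. -/
abbrev Vert (d : ℕ) := List (Fin d)

/-- A permutation of the vertices sends children of `v` to children of the image
of `v`. -/
def MapsChildren {d : ℕ} (f : Equiv.Perm (Vert d)) : Prop :=
  ∀ (v : Vert d) (i : Fin d), ∃ j : Fin d, f (v ++ [i]) = f v ++ [j]

/-- The automorphism group of the rooted `d`-regular tree, realised as the subgroup
of permutations of the vertex set which, together with their inverses, map children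
to children (equivalently, preserve the root, the levels and the tree structure). -/
def AutT (d : ℕ) : Subgroup (Equiv.Perm (Vert d)) where
  carrier := {f | MapsChildren f ∧ MapsChildren f.symm}
  one_mem' := ⟨fun v i => ⟨i, rfl⟩, fun v i => ⟨i, rfl⟩⟩
  mul_mem' := by
    rintro f g ⟨hf, hf'⟩ ⟨hg, hg'⟩
    refine ⟨fun v i => ?_, fun v i => ?_⟩
    · obtain ⟨j, hj⟩ := hg v i
      obtain ⟨k, hk⟩ := hf (g v) j
      exact ⟨k, by simp [Equiv.Perm.mul_apply, hj, hk]⟩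
    · obtain ⟨j, hj⟩ := hf' v i
      obtain ⟨k, hk⟩ := hg' (f.symm v) j
      exact ⟨k, show g.symm (f.symm (v ++ [i])) = g.symm (f.symm v) ++ [k] by
        rw [hj, hk]⟩
  inv_mem' := by
    rintro f ⟨hf, hf'⟩
    exact ⟨hf', by first | exact hf | simpa [Equiv.Perm.inv_def] using hf⟩

/-- The full pointwise stabilizer of level `n` in `Aut T`. -/
def lvlStab (d n : ℕ) : Subgroup (AutT d) where
  carrier := {f | ∀ v : Vert d, v.length = n → (f : Equiv.Perm (Vert d)) v = v}
  one_mem' := fun v _ => rfl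
  mul_mem' := by
    intro f g hf hg v hv
    simp [Equiv.Perm.mul_apply, hg v hv, hf v hv]
  inv_mem' := by
    intro f hf v hv
    have h := hf v hv
    have h2 : (f : Equiv.Perm (Vert d))⁻¹ v = v := by
      rw [Equiv.Perm.inv_eq_iff_eq]; exact h.symm
    simpa using h2

/-- The subgroup of automorphisms supported on the subtree rooted at the word `u`. -/
def rigid (d : ℕ) (u : Vert d) : Subgroup (AutT d) where
  carrier := {f | ∀ w : Vert d, ¬ u <+: w → (f : Equiv.Perm (Vert d)) w = w}
  one_mem' := fun w _ => rfl
  mul_mem' := by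
    intro f g hf hg w hw
    simp [Equiv.Perm.mul_apply, hg w hw, hf w hw]
  inv_mem' := by
    intro f hf w hw
    have h := hf w hw
    have h2 : (f : Equiv.Perm (Vert d))⁻¹ w = w := by
      rw [Equiv.Perm.inv_eq_iff_eq]; exact h.symm
    simpa using h2

/-- The rigid stabilizer in `G` of the vertex `u`. -/
def ristV {d : ℕ} (G : Subgroup (AutT d)) (u : Vert d) : Subgroup (AutT d) :=
  G ⊓ rigid d u

/-- The rigid stabilizer in `G` of level `n`: the subgroup generated by (equivalently,
the product of) the rigid vertex stabilizers at level `n`. -/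
def ristL {d : ℕ} (G : Subgroup (AutT d)) (n : ℕ) : Subgroup (AutT d) :=
  ⨆ u ∈ {u : Vert d | u.length = n}, ristV G u

/-- `G` acts transitively on every level of the tree. -/
def LevelTransitive {d : ℕ} (G : Subgroup (AutT d)) : Prop :=
  ∀ u v : Vert d, u.length = v.length → ∃ g ∈ G, (g : Equiv.Perm (Vert d)) u = v

section GGS

variable (p : ℕ) [NeZero p]

/-- The rooted automorphism `a` of the `p`-regular tree: it permutes the first-level
subtrees by the `p`-cycle `x ↦ x + 1`. -/
def gA : List (Fin p) → List (Fin p)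
  | [] => []
  | x :: w => (x + 1) :: w

/-- The inverse of `gA`. -/
def gAI : List (Fin p) → List (Fin p)
  | [] => []
  | x :: w => (x - 1) :: w

/-- The directed automorphism `b = (a, a, …, a, b)` of the GGS-group with constant
defining vector. -/
def gB : List (Fin p) → List (Fin p)
  | [] => []
  | x :: w => if (x : ℕ) = p - 1 then x :: gB w else x :: gA p w

/-- The inverse of `gB`. -/
def gBI : List (Fin p) → List (Fin p)
  | [] => []
  | x :: w => if (x : ℕ) = p - 1 then x :: gBI w else x :: gAI p w

theorem gAI_gA : ∀ l, gAI p (gA p l) = l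
  | [] => rfl
  | x :: w => by simp [gA, gAI]

theorem gA_gAI : ∀ l, gA p (gAI p l) = l
  | [] => rfl
  | x :: w => by simp [gA, gAI]

theorem gBI_gB : ∀ l, gBI p (gB p l) = l
  | [] => rfl
  | x :: w => by
    by_cases h : (x : ℕ) = p - 1
    · simp [gB, gBI, h, gBI_gB w]
    · simp [gB, gBI, h, gAI_gA]

theorem gB_gBI : ∀ l, gB p (gBI p l) = l
  | [] => rfl
  | x :: w => by
    by_cases h : (x : ℕ) = p - 1
    · simp [gB, gBI, h, gB_gBI w]
    · simp [gB, gBI, h, gA_gAI]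

/-- `a` as a permutation of the vertices. -/
def aPerm : Equiv.Perm (Vert p) :=
  ⟨gA p, gAI p, gAI_gA p, gA_gAI p⟩

/-- `b` as a permutation of the vertices. -/
def bPerm : Equiv.Perm (Vert p) :=
  ⟨gB p, gBI p, gBI_gB p, gB_gBI p⟩

theorem gA_append (v : Vert p) (i : Fin p) : ∃ j, gA p (v ++ [i]) = gA p v ++ [j] := by
  cases v with
  | nil => exact ⟨i + 1, rfl⟩
  | cons x w => exact ⟨i, rfl⟩

theorem gAI_append (v : Vert p) (i : Fin p) : ∃ j, gAI p (v ++ [i]) = gAI p v ++ [j] := by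
  cases v with
  | nil => exact ⟨i - 1, rfl⟩
  | cons x w => exact ⟨i, rfl⟩

theorem gB_append : ∀ (v : Vert p) (i : Fin p), ∃ j, gB p (v ++ [i]) = gB p v ++ [j]
  | [], i => by
    by_cases h : (i : ℕ) = p - 1 <;> exact ⟨i, by simp [gB, gA, h]⟩
  | x :: w, i => by
    by_cases h : (x : ℕ) = p - 1
    · obtain ⟨j, hj⟩ := gB_append w i
      exact ⟨j, by simp [gB, h, hj]⟩
    · obtain ⟨j, hj⟩ := gA_append p w i
      exact ⟨j, by simp [gB, h, hj]⟩

theorem gBI_append : ∀ (v : Vert p) (i : Fin p), ∃ j, gBI p (v ++ [i]) = gBI p v ++ [j]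
  | [], i => by
    by_cases h : (i : ℕ) = p - 1 <;> exact ⟨i, by simp [gBI, gAI, h]⟩
  | x :: w, i => by
    by_cases h : (x : ℕ) = p - 1
    · obtain ⟨j, hj⟩ := gBI_append w i
      exact ⟨j, by simp [gBI, h, hj]⟩
    · obtain ⟨j, hj⟩ := gAI_append p w i
      exact ⟨j, by simp [gBI, h, hj]⟩

/-- The generator `a` of the GGS-group, as a tree automorphism. -/
def aut_a : AutT p :=
  ⟨aPerm p, gA_append p, gAI_append p⟩

/-- The generator `b` of the GGS-group (constant defining vector), as a tree
automorphism. -/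
def aut_b : AutT p :=
  ⟨bPerm p, gB_append p, gBI_append p⟩

/-- The GGS-group with constant defining vector: `G = ⟨a, b⟩`. -/
def GGS : Subgroup (AutT p) :=
  Subgroup.closure {aut_a p, aut_b p}

/-- `K = ⟨b a⁻¹⟩^G`, the normal closure of `b a⁻¹` in `G`. -/
def GGSK : Subgroup (AutT p) :=
  Subgroup.closure {x | ∃ g ∈ GGS p, x = g * (aut_b p * (aut_a p)⁻¹) * g⁻¹}

end GGS
/-!
Write `ψ` for the first-level section map and `G`, `K` for `GGS p`, `GGSK p`.
Since `ψ([a, b]) = (ba⁻¹, 1, …, 1, ab⁻¹)` has all its sections in `K`, and `G` normalises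
`ψ⁻¹(K × ⋯ × K)` (conjugation by `a` permutes coordinates, and `b` has sections in `G`, which
normalises `K`), we get `ψ(G') ≤ K × ⋯ × K` and hence `ψ(G'') ≤ K' × ⋯ × K'`.

Conversely, `G` is fractal: every `g ∈ G` is the first section of some element of
`G ∩ St(1)`. Conjugating `[a, b]` and `(a [a, b] a⁻¹)⁻¹` by such elements, every `k ∈ K` is the
first section of elements of `G'` supported on the coordinates `{0, -1}`, resp. `{0, 1}`. For
`p ≥ 3` these supports meet only in `0`, so commutators of such elements give
`ψ⁻¹([k₁, k₂], 1, …, 1) ∈ G''`, and conjugation by powers of `a` moves `K'` to every coordinate.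
-/

open Subgroup Set
open scoped commutatorElement

section

variable {Γ : Type*} [Group Γ]

theorem Subgroup.le_normalizer_commutator {H K₁ K₂ : Subgroup Γ} (h₁ : H ≤ normalizer K₁)
    (h₂ : H ≤ normalizer K₂) : H ≤ normalizer (⁅K₁, K₂⁆ : Subgroup Γ) := fun g hg => by
  rw [mem_normalizer_iff_map_conj_eq, map_commutator, mem_normalizer_iff_map_conj_eq.mp (h₁ hg),
    mem_normalizer_iff_map_conj_eq.mp (h₂ hg)]

theorem Subgroup.commutator_closure_le {S : Set Γ} {H : Subgroup Γ}
    (hN : closure S ≤ normalizer H) (hS : ∀ s ∈ S, ∀ t ∈ S, ⁅s, t⁆ ∈ H) :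
    ⁅closure S, closure S⁆ ≤ H := by
  have conj_mem {g h : Γ} (hg : g ∈ closure S) (hh : h ∈ H) : g * h * g⁻¹ ∈ H :=
    le_normalizer_iff.mp hN g hg h hh
  rw [commutator_le]
  intro g hg h hh
  induction hg, hh using closure_induction₂ with
  | mem x y hx hy => exact hS x hx y hy
  | one_left x hx => simp
  | one_right x hx => simp
  | mul_left x y z hx hy hz ihx ihy =>
    rw [show ⁅x * y, z⁆ = x * ⁅y, z⁆ * x⁻¹ * ⁅x, z⁆ by group]
    exact mul_mem (conj_mem hx ihy) ihx
  | mul_right y z x hy hz hx ihy ihz =>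
    rw [show ⁅x, y * z⁆ = ⁅x, y⁆ * (y * ⁅x, z⁆ * y⁻¹) by group]
    exact mul_mem ihy (conj_mem hy ihz)
  | inv_left x y hx hy ih =>
    rw [show ⁅x⁻¹, y⁆ = x⁻¹ * ⁅x, y⁆⁻¹ * x⁻¹⁻¹ by group]
    exact conj_mem (inv_mem hx) (inv_mem ih)
  | inv_right x y hx hy ih =>
    rw [show ⁅x, y⁻¹⁆ = y⁻¹ * ⁅x, y⁆⁻¹ * y⁻¹⁻¹ by group]
    exact conj_mem (inv_mem hy) (inv_mem ih)

theorem Pi.commutatorElement_eq_mulSingle {ι : Type*} [DecidableEq ι] {T₁ T₂ : Set ι} {i : ι}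
    (hT : T₁ ∩ T₂ ⊆ {i}) {s₁ s₂ : ι → Γ} (hs₁ : s₁ ∈ Subgroup.pi T₁ᶜ fun _ => (⊥ : Subgroup Γ))
    (hs₂ : s₂ ∈ Subgroup.pi T₂ᶜ fun _ => (⊥ : Subgroup Γ)) :
    ⁅s₁, s₂⁆ = Pi.mulSingle i ⁅s₁ i, s₂ i⁆ := by
  funext x
  by_cases hx : x = i
  · subst hx; simp [commutatorElement_def]
  · have : x ∉ T₁ ∨ x ∉ T₂ := by
      by_contra! h
      exact hx (hT h)
    rcases this with h | h
    · simp [commutatorElement_def, hx, mem_bot.mp (hs₁ x h)]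
    · simp [commutatorElement_def, hx, mem_bot.mp (hs₂ x h)]

end

namespace AutT

variable {d : ℕ}

theorem apply_nil (f : AutT d) : (f : Equiv.Perm (Vert d)) [] = [] := by
  rcases List.eq_nil_or_concat ((f : Equiv.Perm (Vert d)) []) with h | ⟨v, i, h⟩
  · exact h
  · obtain ⟨j, hj⟩ := f.2.2 v i
    have h' := (f : Equiv.Perm (Vert d)).symm_apply_apply []
    rw [h, List.concat_eq_append, hj] at h'
    exact absurd h' (List.append_ne_nil_of_right_ne_nil _ (List.cons_ne_nil j []))

def sectionsFun (k : Fin d → Vert d → Vert d) : Vert d → Vert d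
  | [] => []
  | x :: w => x :: k x w

def sectionsPerm (k : Fin d → Equiv.Perm (Vert d)) : Equiv.Perm (Vert d) where
  toFun := sectionsFun fun x => k x
  invFun := sectionsFun fun x => (k x).symm
  left_inv := by rintro (_ | ⟨x, w⟩) <;> simp [sectionsFun]
  right_inv := by rintro (_ | ⟨x, w⟩) <;> simp [sectionsFun]

theorem mapsChildren_sectionsPerm (k : Fin d → AutT d) :
    MapsChildren (sectionsPerm fun x => k x) := by
  rintro (_ | ⟨x, w⟩) i
  · exact ⟨i, by simp [sectionsPerm, sectionsFun, apply_nil]⟩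
  · obtain ⟨j, hj⟩ := (k x).2.1 w i
    exact ⟨j, by simp [sectionsPerm, sectionsFun, hj]⟩

/-- `ψ⁻¹`: the automorphism fixing the first level whose section at the vertex `x` is `k x`. -/
def ofSections : (Fin d → AutT d) →* AutT d where
  toFun k := ⟨sectionsPerm fun x => k x, mapsChildren_sectionsPerm k,
    mapsChildren_sectionsPerm k⁻¹⟩
  map_one' := Subtype.ext <| Equiv.ext <| by rintro (_ | ⟨x, w⟩) <;> rfl
  map_mul' _ _ := Subtype.ext <| Equiv.ext <| by rintro (_ | ⟨x, w⟩) <;> rfl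

@[simp]
theorem ofSections_apply_cons (k : Fin d → AutT d) (x : Fin d) (w : Vert d) :
    (ofSections k : Equiv.Perm (Vert d)) (x :: w) = x :: (k x : Equiv.Perm (Vert d)) w :=
  rfl

theorem mem_map_ofSections_pi_iff {N : Subgroup (AutT d)} {f : AutT d} :
    f ∈ (pi univ fun _ => N).map ofSections ↔
      ∀ x : Fin d, ∃ k ∈ N, ∀ w : Vert d,
        (f : Equiv.Perm (Vert d)) (x :: w) = x :: (k : Equiv.Perm (Vert d)) w := by
  constructor
  · rintro ⟨k, hk, rfl⟩ x
    exact ⟨k x, hk x trivial, fun w => rfl⟩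
  · intro h
    choose k hk hfk using h
    refine ⟨k, fun x _ => hk x, Subtype.ext <| Equiv.ext ?_⟩
    rintro (_ | ⟨x, w⟩)
    · rw [apply_nil, apply_nil]
    · rw [hfk, ofSections_apply_cons]

theorem ofSections_mem_normalizer_map_pi {N : Subgroup (AutT d)} {k : Fin d → AutT d}
    (hk : ∀ x, k x ∈ normalizer (N : Set (AutT d))) :
    ofSections k ∈ normalizer ((pi univ fun _ => N).map ofSections : Set (AutT d)) := by
  refine le_normalizer_map ofSections ⟨k, ?_, rfl⟩
  refine mem_normalizer_iff.mpr fun h => ?_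
  simp only [Subgroup.mem_pi, mem_univ, true_implies, Pi.mul_apply, Pi.inv_apply]
  exact forall_congr' fun x => mem_normalizer_iff.mp (hk x) (h x)

end AutT

open AutT

section GGS

variable {p : ℕ} [NeZero p]

theorem Fin.val_eq_sub_one_iff {x : Fin p} : (x : ℕ) = p - 1 ↔ x = -1 := by
  obtain ⟨n, rfl⟩ := Nat.exists_eq_succ_of_ne_zero (NeZero.ne p)
  simp [Fin.ext_iff]

theorem Fin.one_ne_zero_of_one_lt (hp : 1 < p) : (1 : Fin p) ≠ 0 := by
  obtain ⟨n, rfl⟩ : ∃ n, p = n + 2 := ⟨p - 2, by omega⟩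
  simp

theorem Fin.one_ne_neg_one (hp : 2 < p) : (1 : Fin p) ≠ -1 := by
  obtain ⟨n, rfl⟩ : ∃ n, p = n + 3 := ⟨p - 3, by omega⟩
  simp [Fin.ext_iff, Fin.coe_neg_one]

theorem aut_a_mem_GGS : aut_a p ∈ GGS p := subset_closure (mem_insert _ _)

theorem aut_b_mem_GGS : aut_b p ∈ GGS p := subset_closure (mem_insert_of_mem _ rfl)

theorem aut_a_mul_ofSections_mul_inv (k : Fin p → AutT p) :
    aut_a p * ofSections k * (aut_a p)⁻¹ = ofSections fun x => k (x - 1) := by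
  refine Subtype.ext <| Equiv.ext ?_
  rintro (_ | ⟨x, w⟩)
  · rfl
  · show gA p ((ofSections k : Equiv.Perm (Vert p)) (gAI p (x :: w))) = _
    simp [gA, gAI]

def bSections : Fin p → AutT p := fun x => if x = -1 then aut_b p else aut_a p

theorem aut_b_eq_ofSections : aut_b p = ofSections bSections := by
  refine Subtype.ext <| Equiv.ext ?_
  rintro (_ | ⟨x, w⟩)
  · rfl
  · show gB p (x :: w) = _
    by_cases hx : x = -1 <;>
      simp [gB, bSections, hx, Fin.val_eq_sub_one_iff] <;> rfl

theorem bSections_mem_GGS (x : Fin p) : bSections x ∈ GGS p := by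
  unfold bSections
  split_ifs
  exacts [aut_b_mem_GGS, aut_a_mem_GGS]

theorem GGS_le_normalizer_GGSK : GGS p ≤ normalizer (GGSK p : Set (AutT p)) :=
  le_normalizer_closure_iff.mpr <| by
    rintro h hh _ ⟨g, hg, rfl⟩
    exact subset_closure ⟨h * g, mul_mem hh hg, by group⟩

theorem aut_a_mem_normalizer_map_ofSections_pi (N : Subgroup (AutT p)) :
    aut_a p ∈ normalizer ((pi univ fun _ => N).map ofSections : Set (AutT p)) := by
  refine mem_normalizer_iff.mpr fun h => ⟨?_, ?_⟩
  · rintro ⟨k, hk, rfl⟩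
    exact ⟨_, fun x _ => hk (x - 1) trivial, (aut_a_mul_ofSections_mul_inv k).symm⟩
  · rintro ⟨k, hk, hak⟩
    refine ⟨fun x => k (x + 1), fun x _ => hk (x + 1) trivial, ?_⟩
    have h_conj := aut_a_mul_ofSections_mul_inv fun x => k (x + 1)
    simp only [sub_add_cancel, hak] at h_conj
    exact mul_left_cancel (mul_right_cancel h_conj)

theorem GGS_le_normalizer_map_ofSections_pi_GGSK :
    GGS p ≤ normalizer ((pi univ fun _ => GGSK p).map ofSections : Set (AutT p)) := by
  refine (closure_le _).mpr (insert_subset_iff.mpr ⟨?_, singleton_subset_iff.mpr ?_⟩)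
  · exact aut_a_mem_normalizer_map_ofSections_pi _
  · rw [aut_b_eq_ofSections]
    exact ofSections_mem_normalizer_map_pi fun x => GGS_le_normalizer_GGSK (bSections_mem_GGS x)

def cSections : Fin p → AutT p := fun x => bSections (x - 1) * (bSections x)⁻¹

theorem cSections_zero (hp : 1 < p) : cSections 0 = aut_b p * (aut_a p)⁻¹ := by
  simp [cSections, bSections, Fin.one_ne_zero_of_one_lt hp]

theorem cSections_neg_one (hp : 1 < p) : cSections (-1) = aut_a p * (aut_b p)⁻¹ := by
  simp [cSections, bSections, Fin.one_ne_zero_of_one_lt hp]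

theorem cSections_eq_one {x : Fin p} (h₀ : x ≠ 0) (h₁ : x ≠ -1) : cSections x = 1 := by
  simp [cSections, bSections, h₀, h₁]

theorem commutator_aut_a_aut_b : ⁅aut_a p, aut_b p⁆ = ofSections cSections := by
  rw [commutatorElement_def, aut_b_eq_ofSections, aut_a_mul_ofSections_mul_inv, ← map_inv,
    ← map_mul]
  rfl

theorem cSections_mem_GGSK (x : Fin p) : cSections x ∈ GGSK p := by
  have hba : aut_b p * (aut_a p)⁻¹ ∈ GGSK p := subset_closure ⟨1, one_mem _, by group⟩
  have hab : aut_a p * (aut_b p)⁻¹ ∈ GGSK p := by simpa using inv_mem hba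
  unfold cSections bSections
  split_ifs <;> simp [hab, hba]

theorem commutator_GGS_le_map_ofSections_pi_GGSK :
    ⁅GGS p, GGS p⁆ ≤ (pi univ fun _ => GGSK p).map ofSections := by
  refine commutator_closure_le GGS_le_normalizer_map_ofSections_pi_GGSK ?_
  have hab : ⁅aut_a p, aut_b p⁆ ∈ (pi univ fun _ => GGSK p).map ofSections :=
    ⟨_, fun x _ => cSections_mem_GGSK x, commutator_aut_a_aut_b.symm⟩
  simp only [mem_insert_iff, mem_singleton_iff]
  rintro s (rfl | rfl) t (rfl | rfl)
  · simp
  · exact hab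
  · rw [← commutatorElement_inv]; exact inv_mem hab
  · simp

theorem commutator_commutator_GGS_le_map_ofSections_pi :
    ⁅⁅GGS p, GGS p⁆, ⁅GGS p, GGS p⁆⁆ ≤
      (pi univ fun _ => ⁅GGSK p, GGSK p⁆).map ofSections := by
  rw [← commutator_pi_pi_of_finite, map_commutator]
  exact commutator_mono commutator_GGS_le_map_ofSections_pi_GGSK
    commutator_GGS_le_map_ofSections_pi_GGSK

theorem GGS_le_map_eval_zero_comap_ofSections (hp : 1 < p) :
    GGS p ≤ ((GGS p).comap ofSections).map (Pi.evalMonoidHom _ 0) := by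
  refine (closure_le _).mpr (insert_subset_iff.mpr ⟨?_, singleton_subset_iff.mpr ?_⟩)
  · refine ⟨bSections, ?_, ?_⟩
    · rw [SetLike.mem_coe, mem_comap, ← aut_b_eq_ofSections]; exact aut_b_mem_GGS
    · simp [bSections, Fin.one_ne_zero_of_one_lt hp]
  · refine ⟨fun x => bSections (x - 1), ?_, by simp [bSections]⟩
    rw [SetLike.mem_coe, mem_comap, ← aut_a_mul_ofSections_mul_inv, ← aut_b_eq_ofSections]
    exact mul_mem (mul_mem aut_a_mem_GGS aut_b_mem_GGS) (inv_mem aut_a_mem_GGS)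

theorem GGSK_le_map_eval_zero_of_support (hp : 1 < p) {T : Set (Fin p)} {σ : Fin p → AutT p}
    (hσ : ofSections σ ∈ ⁅GGS p, GGS p⁆) (hσ₀ : σ 0 = aut_b p * (aut_a p)⁻¹)
    (hσT : ∀ x ∉ T, σ x = 1) :
    GGSK p ≤ (⁅GGS p, GGS p⁆.comap ofSections ⊓ pi Tᶜ fun _ => ⊥).map (Pi.evalMonoidHom _ 0) := by
  refine (closure_le _).mpr ?_
  rintro _ ⟨g, hg, rfl⟩
  obtain ⟨t, ht, rfl⟩ := GGS_le_map_eval_zero_comap_ofSections hp hg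
  refine ⟨t * σ * t⁻¹, ⟨?_, fun x hx => ?_⟩, by simp [hσ₀]⟩
  · show ofSections (t * σ * t⁻¹) ∈ ⁅GGS p, GGS p⁆
    rw [map_mul, map_mul, map_inv]
    exact le_normalizer_iff.mp (normalizer_commutator_ge_left (GGS p) (GGS p)) _ ht _ hσ
  · simp [hσT x hx]

theorem ofSections_cSections_mem_commutator : ofSections cSections ∈ ⁅GGS p, GGS p⁆ := by
  rw [← commutator_aut_a_aut_b]
  exact commutator_mem_commutator aut_a_mem_GGS aut_b_mem_GGS

theorem GGSK_le_map_eval_zero_support_zero_neg_one (hp : 1 < p) :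
    GGSK p ≤ (⁅GGS p, GGS p⁆.comap ofSections ⊓ pi {0, -1}ᶜ fun _ => ⊥).map
      (Pi.evalMonoidHom _ 0) :=
  GGSK_le_map_eval_zero_of_support hp ofSections_cSections_mem_commutator (cSections_zero hp)
    fun x hx => cSections_eq_one (by simp_all) (by simp_all)

theorem GGSK_le_map_eval_zero_support_zero_one (hp : 1 < p) :
    GGSK p ≤ (⁅GGS p, GGS p⁆.comap ofSections ⊓ pi {0, 1}ᶜ fun _ => ⊥).map
      (Pi.evalMonoidHom _ 0) := by
  refine GGSK_le_map_eval_zero_of_support hp (σ := fun x => (cSections (x - 1))⁻¹) ?_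
    (by simp [cSections_neg_one hp])
    fun x hx => by rw [cSections_eq_one (by simp_all [sub_eq_zero]) (by simp_all), inv_one]
  rw [show (fun x => (cSections (x - 1))⁻¹) = (fun x => cSections (x - 1))⁻¹ from rfl, map_inv,
    ← aut_a_mul_ofSections_mul_inv]
  exact inv_mem <| le_normalizer_iff.mp (normalizer_commutator_ge_left (GGS p) (GGS p)) _
    aut_a_mem_GGS _ ofSections_cSections_mem_commutator

theorem ofSections_mulSingle_zero_mem (hp : 2 < p) {k : AutT p} (hk : k ∈ ⁅GGSK p, GGSK p⁆) :
    ofSections (Pi.mulSingle 0 k) ∈ ⁅⁅GGS p, GGS p⁆, ⁅GGS p, GGS p⁆⁆ := by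
  suffices ⁅GGSK p, GGSK p⁆ ≤ ⁅⁅GGS p, GGS p⁆, ⁅GGS p, GGS p⁆⁆.comap
      (ofSections.comp (MonoidHom.mulSingle (fun _ : Fin p => AutT p) 0)) from this hk
  refine commutator_le.mpr fun k₁ hk₁ k₂ hk₂ => ?_
  obtain ⟨s₁, ⟨hs₁, hs₁T⟩, rfl⟩ := GGSK_le_map_eval_zero_support_zero_neg_one (by omega) hk₁
  obtain ⟨s₂, ⟨hs₂, hs₂T⟩, rfl⟩ := GGSK_le_map_eval_zero_support_zero_one (by omega) hk₂
  have h_supp : ({0, -1} ∩ {0, 1} : Set (Fin p)) ⊆ {0} := by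
    rintro x ⟨h₁, h₂⟩
    simp only [mem_insert_iff, mem_singleton_iff] at h₁ h₂ ⊢
    rcases h₂ with h₂ | h₂
    · exact h₂
    · exact h₁.resolve_right fun h => Fin.one_ne_neg_one hp (h₂.symm.trans h)
  simp only [mem_comap, MonoidHom.comp_apply, MonoidHom.mulSingle_apply, Pi.evalMonoidHom_apply]
  rw [← Pi.commutatorElement_eq_mulSingle h_supp hs₁T hs₂T, map_commutatorElement]
  exact commutator_mem_commutator hs₁ hs₂

open Fin.NatCast in
theorem ofSections_mulSingle_mem (hp : 2 < p) (i : Fin p) {k : AutT p}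
    (hk : k ∈ ⁅GGSK p, GGSK p⁆) :
    ofSections (Pi.mulSingle i k) ∈ ⁅⁅GGS p, GGS p⁆, ⁅GGS p, GGS p⁆⁆ := by
  have h_norm : GGS p ≤ normalizer (⁅⁅GGS p, GGS p⁆, ⁅GGS p, GGS p⁆⁆ : Subgroup (AutT p)) :=
    le_normalizer_commutator (normalizer_commutator_ge_left _ _)
      (normalizer_commutator_ge_left _ _)
  suffices ∀ n : ℕ, ofSections (Pi.mulSingle (n : Fin p) k) ∈ ⁅⁅GGS p, GGS p⁆, ⁅GGS p, GGS p⁆⁆ by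
    simpa using this i
  intro n
  induction n with
  | zero => simpa using ofSections_mulSingle_zero_mem hp hk
  | succ n ih =>
    have h_conj := le_normalizer_iff.mp h_norm _ aut_a_mem_GGS _ ih
    rw [aut_a_mul_ofSections_mul_inv] at h_conj
    convert h_conj using 2
    funext x
    simp [Pi.mulSingle_apply, sub_eq_iff_eq_add]

theorem commutator_commutator_GGS_eq (hp : 2 < p) :
    ⁅⁅GGS p, GGS p⁆, ⁅GGS p, GGS p⁆⁆ = (pi univ fun _ => ⁅GGSK p, GGSK p⁆).map ofSections := by
  refine le_antisymm commutator_commutator_GGS_le_map_ofSections_pi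
    (map_le_iff_le_comap.mpr (pi_le_iff.mpr ?_))
  rintro i _ ⟨k, hk, rfl⟩
  exact ofSections_mulSingle_mem hp i hk

end GGS

/-- Lemma 4.6: for the GGS-group `G` with constant defining vector
and `p = 3`, the second derived subgroup satisfies `ψ(G'') = K' × K' × K'`, where
`K = ⟨ba⁻¹⟩^G`:  `G''` consists exactly of the tree automorphisms whose three
first-level sections lie in `K'`. -/
theorem stmt_12 :
    ((⁅⁅GGS 3, GGS 3⁆, ⁅GGS 3, GGS 3⁆⁆ : Subgroup (AutT 3)) : Set (AutT 3)) =
      {f : AutT 3 | ∀ x : Fin 3, ∃ k ∈ ⁅GGSK 3, GGSK 3⁆, ∀ w : Vert 3,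
        (f : Equiv.Perm (Vert 3)) (x :: w) = x :: (k : Equiv.Perm (Vert 3)) w} := by
  ext f
  rw [SetLike.mem_coe, commutator_commutator_GGS_eq (by norm_num), mem_map_ofSections_pi_iff]
  rfl
end

section
/- For the GGS-group G with constant defining vector and p = 3, the second derived subgroup G'' is contained in γ₃(K), the third term of the lower central series of K = ⟨ba⁻¹⟩^G. -/
/-!
Write `c = [a, b]` and `t = ba⁻¹`. As `G = ⟨a, b⟩`, the derived subgroup `G'` is the normal
closure of `c`, and `G = K⟨a⟩` with `a³ = 1` and `c ∈ K`. The element `c` fixes the first level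
with sections `t, 1, t⁻¹` there (the paper's `ψ([a,b]) = (b⁻¹a, 1, a⁻¹b)`, written for right
actions); conjugating by a power of `a` only permutes these sections, so `c` commutes with every
`c^{a^i}`. For `k ∈ K`, conjugating `c^{a^i}` further by `k` changes `[c, c^{a^i}] = 1` only by an
element of `[K, [K, K]]`. So modulo `γ₃(K)` the element `c` commutes with all of its conjugates,
hence its normal closure, which contains `G'`, is abelian there, and `G'' ≤ γ₃(K)`.
-/

open Subgroup
open scoped commutatorElement

section

variable {H : Type*} [Group H]

theorem closure_pair_eq_top_of_surjective {Q : Type*} [Group Q] (f : H →* Q)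
    (hf : Function.Surjective f) {x y : H} (hgen : closure {x, y} = ⊤) :
    closure {f x, f y} = ⊤ := by
  rw [← Set.image_pair, ← MonoidHom.map_closure, hgen, map_top_of_surjective f hf]

theorem commute_of_closure_pair_eq_top {x y : H} (hgen : closure {x, y} = ⊤)
    (hxy : Commute x y) (p q : H) : Commute p q := by
  have : IsMulCommutative (closure {x, y}) := isMulCommutative_closure <| by
    rintro _ (rfl | rfl) _ (rfl | rfl)
    exacts [rfl, hxy.eq, hxy.eq.symm, rfl]
  exact congrArg Subtype.val
    (mul_comm' (⟨p, hgen ▸ mem_top p⟩ : closure {x, y}) ⟨q, hgen ▸ mem_top q⟩)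

theorem commutator_le_normalClosure_commutatorElement {x y : H} (hgen : closure {x, y} = ⊤) :
    commutator H ≤ normalClosure {⁅x, y⁆} := by
  set N := normalClosure ({⁅x, y⁆} : Set H)
  refine Normal.quotient_commutative_iff_commutator_le.mp ⟨⟨fun p q => ?_⟩⟩
  have hgen' := closure_pair_eq_top_of_surjective _ (QuotientGroup.mk'_surjective N) hgen
  refine commute_of_closure_pair_eq_top hgen' ?_ p q
  rw [← commutatorElement_eq_one_iff_commute, ← map_commutatorElement, QuotientGroup.mk'_apply,
    QuotientGroup.eq_one_iff]
  exact subset_normalClosure rfl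

theorem isMulCommutative_normalClosure_singleton {c : H}
    (hc : ∀ g : H, Commute c (g * c * g⁻¹)) : IsMulCommutative (normalClosure ({c} : Set H)) := by
  refine isMulCommutative_closure ?_
  simp only [Group.mem_conjugatesOfSet_iff, Set.mem_singleton_iff, exists_eq_left, isConj_iff]
  rintro _ ⟨g, rfl⟩ _ ⟨h, rfl⟩
  have := (hc (g⁻¹ * h)).map (MulAut.conj g).toMonoidHom
  simp only [MulEquiv.coe_toMonoidHom, MulAut.conj_apply] at this
  convert this.eq using 2 <;> group

theorem derivedSeries_two_le_of_commute_conj {x y : H} (hgen : closure {x, y} = ⊤) (N : Subgroup H)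
    [N.Normal] (hN : ∀ g : H, ⁅⁅x, y⁆, g * ⁅x, y⁆ * g⁻¹⁆ ∈ N) :
    derivedSeries H 2 ≤ N := by
  set π := QuotientGroup.mk' N
  have hπ : Function.Surjective π := QuotientGroup.mk'_surjective N
  have hcomm : ∀ q, Commute ⁅π x, π y⁆ (q * ⁅π x, π y⁆ * q⁻¹) := by
    intro q
    obtain ⟨g, rfl⟩ := hπ q
    rw [← commutatorElement_eq_one_iff_commute, ← map_commutatorElement, ← map_mul, ← map_inv,
      ← map_mul, ← map_commutatorElement, QuotientGroup.mk'_apply, QuotientGroup.eq_one_iff]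
    exact hN g
  have hA := isMulCommutative_normalClosure_singleton hcomm
  have hQ' := commutator_le_normalClosure_commutatorElement
    (closure_pair_eq_top_of_surjective π hπ hgen)
  have hQ'' : derivedSeries (H ⧸ N) 2 ≤ ⊥ := (commutator_mono hQ' hQ').trans
    (commutator_eq_bot_iff_le_centralizer.mpr (le_centralizer _)).le
  rwa [← QuotientGroup.ker_mk' N, ← Subgroup.map_eq_bot_iff, eq_bot_iff,
    map_derivedSeries_eq hπ]

theorem commutatorElement_conj_mem_of_commute {K : Subgroup H} [K.Normal] {c d k : H}
    (hc : c ∈ K) (hd : d ∈ K) (hk : k ∈ K) (hcd : Commute c d) :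
    ⁅c, k * d * k⁻¹⁆ ∈ ⁅⁅K, K⁆, K⁆ := by
  have hz : ⁅d⁻¹, k⁆ ∈ ⁅K, K⁆ := commutator_mem_commutator (inv_mem hd) hk
  have hconj : ⁅c, k * d * k⁻¹⁆ = d * ⁅c, ⁅d⁻¹, k⁆⁆ * d⁻¹ := by
    simp only [commutatorElement_def, inv_inv]
    calc c * (k * d * k⁻¹) * c⁻¹ * (k * d * k⁻¹)⁻¹
        = (c * d) * (d⁻¹ * k * d * k⁻¹) * c⁻¹ * (k * d⁻¹ * k⁻¹ * d) * d⁻¹ := by group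
      _ = d * (c * (d⁻¹ * k * d * k⁻¹) * c⁻¹ * (d⁻¹ * k * d * k⁻¹)⁻¹) * d⁻¹ := by
        rw [hcd.eq]; group
  rw [hconj, commutator_comm]
  exact Normal.conj_mem inferInstance _ (commutator_mem_commutator hc hz) d

end

theorem commutator_commutator_le_of_subgroupOf {M : Type*} [Group M] {G K : Subgroup M}
    (hKG : K ≤ G)
    (h : derivedSeries G 2 ≤ ⁅⁅K.subgroupOf G, K.subgroupOf G⁆, K.subgroupOf G⁆) :
    ⁅⁅G, G⁆, ⁅G, G⁆⁆ ≤ ⁅⁅K, K⁆, K⁆ := by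
  have := map_mono (f := G.subtype) h
  rwa [derivedSeries_succ, derivedSeries_one, map_commutator, _root_.commutator_def,
    map_commutator, ← MonoidHom.range_eq_map, range_subtype, map_commutator, map_commutator,
    subgroupOf_map_subtype, inf_eq_left.mpr hKG] at this

namespace GGS

section

variable (p : ℕ) [NeZero p]

theorem aut_a_mem : aut_a p ∈ GGS p := subset_closure (.inl rfl)

theorem aut_b_mem : aut_b p ∈ GGS p := subset_closure (.inr rfl)

abbrev a : GGS p := ⟨aut_a p, aut_a_mem p⟩

abbrev b : GGS p := ⟨aut_b p, aut_b_mem p⟩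

abbrev K : Subgroup (GGS p) := (GGSK p).subgroupOf (GGS p)

theorem closure_a_b_eq_top : closure {a p, b p} = ⊤ := by
  have h : closure (((↑) : GGS p → AutT p) ⁻¹' {aut_a p, aut_b p}) = ⊤ :=
    closure_closure_coe_preimage
  rw [← h]
  congr 1
  ext ⟨g, hg⟩
  simp only [Set.mem_insert_iff, Set.mem_singleton_iff, Set.mem_preimage, Subtype.mk.injEq]

theorem aut_b_mul_inv_aut_a_mem : aut_b p * (aut_a p)⁻¹ ∈ GGSK p :=
  subset_closure ⟨1, one_mem _, by group⟩

variable {p}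

theorem conj_mem_GGSK {g k : AutT p} (hg : g ∈ GGS p) (hk : k ∈ GGSK p) :
    g * k * g⁻¹ ∈ GGSK p := by
  have : GGSK p ≤ (GGSK p).comap (MulAut.conj g).toMonoidHom := by
    refine closure_le _ |>.mpr ?_
    rintro _ ⟨h, hh, rfl⟩
    refine subset_closure ⟨g * h, mul_mem hg hh, ?_⟩
    simp only [MulEquiv.coe_toMonoidHom, MulAut.conj_apply]
    group
  simpa using this hk

variable (p)

theorem GGSK_le_GGS : GGSK p ≤ GGS p :=
  closure_le _ |>.mpr <| by
    rintro _ ⟨g, hg, rfl⟩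
    exact mul_mem (mul_mem hg (mul_mem (aut_b_mem p) (inv_mem (aut_a_mem p)))) (inv_mem hg)

instance : (K p).Normal :=
  ⟨fun _ hk g => mem_subgroupOf.mpr (conj_mem_GGSK g.2 (mem_subgroupOf.mp hk))⟩

theorem commutatorElement_mem_GGSK : ⁅aut_a p, aut_b p⁆ ∈ GGSK p := by
  have h : ⁅aut_a p, aut_b p⁆ =
      aut_a p * (aut_b p * (aut_a p)⁻¹) * (aut_a p)⁻¹ * (aut_b p * (aut_a p)⁻¹)⁻¹ := by
    rw [commutatorElement_def]; group
  rw [h]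
  exact mul_mem (conj_mem_GGSK (aut_a_mem p) (aut_b_mul_inv_aut_a_mem p))
    (inv_mem (aut_b_mul_inv_aut_a_mem p))

variable {p}

theorem exists_mem_GGSK_mul_zpow {g : AutT p} (hg : g ∈ GGS p) :
    ∃ k ∈ GGSK p, ∃ n : ℤ, g = k * aut_a p ^ n := by
  induction hg using closure_induction with
  | mem x hx =>
    rcases hx with rfl | rfl
    · exact ⟨1, one_mem _, 1, by simp⟩
    · exact ⟨_, aut_b_mul_inv_aut_a_mem p, 1, by group⟩
  | one => exact ⟨1, one_mem _, 0, by simp⟩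
  | mul x y _ _ ihx ihy =>
    obtain ⟨k, hk, m, rfl⟩ := ihx
    obtain ⟨l, hl, n, rfl⟩ := ihy
    refine ⟨k * (aut_a p ^ m * l * (aut_a p ^ m)⁻¹), ?_, m + n, by group⟩
    exact mul_mem hk (conj_mem_GGSK (zpow_mem (aut_a_mem p) m) hl)
  | inv x _ ih =>
    obtain ⟨k, hk, n, rfl⟩ := ih
    refine ⟨aut_a p ^ (-n) * k⁻¹ * (aut_a p ^ (-n))⁻¹, ?_, -n, by group⟩
    exact conj_mem_GGSK (zpow_mem (aut_a_mem p) (-n)) (inv_mem hk)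

variable (p) (l : Vert p) (x : Fin p) (w : Vert p)

@[simp] theorem aut_a_apply : (aut_a p : Equiv.Perm (Vert p)) l = gA p l := rfl

@[simp] theorem aut_a_symm_apply : (aut_a p : Equiv.Perm (Vert p)).symm l = gAI p l := rfl

@[simp] theorem aut_b_apply : (aut_b p : Equiv.Perm (Vert p)) l = gB p l := rfl

@[simp] theorem aut_b_symm_apply : (aut_b p : Equiv.Perm (Vert p)).symm l = gBI p l := rfl

theorem gA_cons : gA p (x :: w) = (x + 1) :: w := rfl

theorem gAI_cons : gAI p (x :: w) = (x - 1) :: w := rfl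

theorem gB_cons : gB p (x :: w) = if (x : ℕ) = p - 1 then x :: gB p w else x :: gA p w := rfl

theorem gBI_cons : gBI p (x :: w) = if (x : ℕ) = p - 1 then x :: gBI p w else x :: gAI p w := rfl

end

theorem aut_a_pow_three : aut_a 3 ^ 3 = 1 := by
  refine Subtype.ext (Equiv.ext fun l => ?_)
  rcases l with _ | ⟨x, w⟩
  · rfl
  · fin_cases x <;> simp [pow_succ, gA_cons]

theorem commute_commutatorElement_conj_aut_a :
    Commute ⁅aut_a 3, aut_b 3⁆ (aut_a 3 * ⁅aut_a 3, aut_b 3⁆ * (aut_a 3)⁻¹) := by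
  refine Subtype.ext (Equiv.ext fun l => ?_)
  rcases l with _ | ⟨x, w⟩
  · rfl
  · fin_cases x <;> simp +decide [commutatorElement_def, gA_cons, gAI_cons, gB_cons, gBI_cons,
      gAI_gA, gA_gAI, gBI_gB, gB_gBI]

theorem commute_commutatorElement_conj_aut_a_sq :
    Commute ⁅aut_a 3, aut_b 3⁆ (aut_a 3 ^ 2 * ⁅aut_a 3, aut_b 3⁆ * (aut_a 3 ^ 2)⁻¹) := by
  refine Subtype.ext (Equiv.ext fun l => ?_)
  rcases l with _ | ⟨x, w⟩
  · rfl
  · fin_cases x <;> simp +decide [commutatorElement_def, pow_two, gA_cons, gAI_cons, gB_cons,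
      gBI_cons, gAI_gA, gA_gAI, gBI_gB, gB_gBI]

theorem commute_commutatorElement_conj_aut_a_zpow (n : ℤ) :
    Commute ⁅aut_a 3, aut_b 3⁆ (aut_a 3 ^ n * ⁅aut_a 3, aut_b 3⁆ * (aut_a 3 ^ n)⁻¹) := by
  rw [zpow_eq_zpow_emod' n aut_a_pow_three]
  have h0 : 0 ≤ n % 3 := Int.emod_nonneg n (by norm_num)
  have h3 : n % 3 < 3 := Int.emod_lt_of_pos n (by norm_num)
  generalize n % 3 = r at h0 h3 ⊢
  interval_cases r
  · simp
  · simpa using commute_commutatorElement_conj_aut_a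
  · simpa using commute_commutatorElement_conj_aut_a_sq

theorem commutatorElement_conj_mem (g : GGS 3) :
    ⁅⁅a 3, b 3⁆, g * ⁅a 3, b 3⁆ * g⁻¹⁆ ∈ ⁅⁅K 3, K 3⁆, K 3⁆ := by
  obtain ⟨k, hk, n, hg⟩ := exists_mem_GGSK_mul_zpow g.2
  have hc : ⁅a 3, b 3⁆ ∈ K 3 := mem_subgroupOf.mpr (commutatorElement_mem_GGSK 3)
  let k' : GGS 3 := ⟨k, GGSK_le_GGS 3 hk⟩
  have hgk : g = k' * a 3 ^ n := Subtype.ext hg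
  have hconj : g * ⁅a 3, b 3⁆ * g⁻¹ = k' * (a 3 ^ n * ⁅a 3, b 3⁆ * (a 3 ^ n)⁻¹) * k'⁻¹ := by
    rw [hgk, mul_inv_rev]
    simp only [mul_assoc]
  rw [hconj]
  exact commutatorElement_conj_mem_of_commute hc (Normal.conj_mem inferInstance _ hc (a 3 ^ n))
    (show k' ∈ K 3 from mem_subgroupOf.mpr hk)
    (Subtype.ext (commute_commutatorElement_conj_aut_a_zpow n))

end GGS

/-- Proposition 4.7: for the GGS-group `G` with constant defining
vector and `p = 3`, the second derived subgroup `G''` is contained in `γ₃(K)`, the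
third term of the lower central series of `K = ⟨ba⁻¹⟩^G`
(`γ₃(K) = [[K,K],K]`). -/
theorem stmt_13 :
    ⁅⁅GGS 3, GGS 3⁆, ⁅GGS 3, GGS 3⁆⁆ ≤ ⁅⁅GGSK 3, GGSK 3⁆, GGSK 3⁆ :=
  commutator_commutator_le_of_subgroupOf (GGS.GGSK_le_GGS 3) <|
    derivedSeries_two_le_of_commute_conj (GGS.closure_a_b_eq_top 3) _ GGS.commutatorElement_conj_mem
end
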